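/- arXiv:1105.2468 — 6 statements merged into one kernel-verified Lean document; each statement's English description precedes it below -/
import Mathlib

section
/- Let m ≥ 1 and let u, v be permutations of {1,…,m} satisfying the braid relation u·v·u = v·u·v. Then the cardinality of the support of u is at most twice the cardinality of the intersection of the support of u with the support of v, i.e. |S(u)| ≤ 2·|S(u) ∩ S(v)|. -/
/-! If `u` moves `x` but `v` fixes it, the braid relation evaluated at `x` forces `v` to move
`u x`. Hence `u` maps `S(u) \ S(v)` injectively into `S(u) ∩ S(v)`, and
`|S(u)| = |S(u) \ S(v)| + |S(u) ∩ S(v)| ≤ 2 |S(u) ∩ S(v)|`. -/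

namespace Equiv.Perm

variable {α : Type*} {u v : Perm α}

theorem apply_apply_ne_of_braid (h : u * v * u = v * u * v) {x : α} (hux : u x ≠ x)
    (hvx : v x = x) : v (u x) ≠ u x := by
  intro hvux
  have hbraid : u (v (u x)) = v (u (v x)) := by
    simpa only [mul_apply] using congrArg (fun p : Perm α => p x) h
  rw [hvux, hvx, hvux] at hbraid
  exact hux (u.injective hbraid)

theorem mapsTo_support_sdiff_support_inter_of_braid [DecidableEq α] [Fintype α]
    (h : u * v * u = v * u * v) :
    Set.MapsTo u ↑(u.support \ v.support) ↑(u.support ∩ v.support) := by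
  intro x hx
  simp only [Finset.coe_sdiff, Finset.coe_inter, Set.mem_sdiff, Set.mem_inter_iff,
    Finset.mem_coe, mem_support, not_not] at hx ⊢
  exact ⟨fun huux => hx.1 (u.injective huux), apply_apply_ne_of_braid h hx.1 hx.2⟩

theorem card_support_sdiff_le_card_support_inter_of_braid [DecidableEq α] [Fintype α]
    (h : u * v * u = v * u * v) :
    (u.support \ v.support).card ≤ (u.support ∩ v.support).card :=
  Finset.card_le_card_of_injOn u (mapsTo_support_sdiff_support_inter_of_braid h)
    u.injective.injOn

end Equiv.Perm

theorem support_le_two_mul_inter_support_general (m : ℕ)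
    (u v : Equiv.Perm (Fin m)) (h : u * v * u = v * u * v) :
    u.support.card ≤ 2 * (u.support ∩ v.support).card := by
  have hsplit := Finset.card_sdiff_add_card_inter u.support v.support
  have hsdiff := Equiv.Perm.card_support_sdiff_le_card_support_inter_of_braid h
  omega

/-- If two permutations `u, v` of `{1,…,m}` satisfy the braid relation
`u·v·u = v·u·v`, then `|S(u)| ≤ 2·|S(u) ∩ S(v)|`. -/
theorem support_le_two_mul_inter_support (m : ℕ) (hm : 1 ≤ m)
    (u v : Equiv.Perm (Fin m)) (h : u * v * u = v * u * v) :
    u.support.card ≤ 2 * (u.support ∩ v.support).card :=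
  support_le_two_mul_inter_support_general m u v h
end

section
/- Let m ≥ 1, let k ∈ {2,3}, and let u, v be permutations of {1,…,m} satisfying the braid relation u·v·u = v·u·v. If every nontrivial cycle of u has length k, and every orbit of the subgroup generated by u and v on {1,…,m} has cardinality either 1 or k, then u = v. -/
/-! Both `u` and `v` preserve every orbit `O` of `⟨u, v⟩`, so they restrict to permutations `a, b`
of `O` satisfying the braid relation, and `a ^ k = 1` because `u ^ k = 1`. When `|O| = k` these are
permutations of a set of size `2` or `3`, where a direct check shows that the braid relation together
with `a ^ |O| = 1` forces `a = b`; in `S₃` the exponent condition rules out the pairs of distinct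
transpositions, which do satisfy the braid relation. -/

open MulAction

theorem Equiv.Perm.eq_of_braid_of_pow_card_eq_one {α : Type*} {a b : Perm α}
    (hα : Nat.card α = 2 ∨ Nat.card α = 3) (ha : a ^ Nat.card α = 1)
    (hab : a * b * a = b * a * b) : a = b := by
  obtain ⟨n, hn, hα⟩ : ∃ n, (n = 2 ∨ n = 3) ∧ Nat.card α = n := ⟨_, hα, rfl⟩
  rw [hα] at ha
  have : Finite α := Nat.finite_of_card_ne_zero (by omega)
  have braid_small : ∀ a b : Perm (Fin n), a ^ n = 1 → a * b * a = b * a * b → a = b := by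
    rcases hn with rfl | rfl <;> decide
  let e := (Finite.equivFinOfCardEq hα).permCongrHom
  apply e.injective
  refine braid_small _ _ ?_ (by simp only [← map_mul, hab])
  rw [← map_pow, ha, map_one]

theorem MulAction.smul_eq_of_braid_of_pow_card_orbit_eq_one {G α : Type*} [Group G]
    [MulAction G α] {g h : G} {x : α}
    (hx : Nat.card (orbit G x) = 2 ∨ Nat.card (orbit G x) = 3)
    (hg : g ^ Nat.card (orbit G x) = 1) (hgh : g * h * g = h * g * h) : g • x = h • x := by
  let ρ := toPermHom G (orbit G x)
  have hρ : ρ g = ρ h :=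
    Equiv.Perm.eq_of_braid_of_pow_card_eq_one hx (by rw [← map_pow, hg, map_one])
      (by simp only [← map_mul, hgh])
  exact congrArg Subtype.val (Equiv.congr_fun hρ ⟨x, mem_orbit_self x⟩)

theorem eq_of_braid_of_cycles_eq_general (m k : ℕ) (hk : k = 2 ∨ k = 3)
    (u v : Equiv.Perm (Fin m)) (h : u * v * u = v * u * v)
    (hcyc : ∀ c ∈ u.cycleType, c = k)
    (horb : ∀ x : Fin m,
      Nat.card (MulAction.orbit (Subgroup.closure {u, v} : Subgroup (Equiv.Perm (Fin m))) x) = 1 ∨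
      Nat.card (MulAction.orbit (Subgroup.closure {u, v} : Subgroup (Equiv.Perm (Fin m))) x) = k) :
    u = v := by
  have : Fact k.Prime := ⟨by rcases hk with rfl | rfl <;> norm_num⟩
  let G := Subgroup.closure ({u, v} : Set (Equiv.Perm (Fin m)))
  let g : G := ⟨u, Subgroup.subset_closure (by simp)⟩
  let g' : G := ⟨v, Subgroup.subset_closure (by simp)⟩
  refine Equiv.ext fun x => ?_
  change g • x = g' • x
  rcases horb x with hx | hx
  · have : Subsingleton (orbit G x) := (Nat.card_eq_one_iff_unique.mp hx).1
    exact congrArg Subtype.val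
      (Subsingleton.elim (⟨g • x, mem_orbit x g⟩ : orbit G x) ⟨g' • x, mem_orbit x g'⟩)
  · refine smul_eq_of_braid_of_pow_card_orbit_eq_one (by rwa [hx]) ?_ (Subtype.ext h)
    rw [hx]
    exact Subtype.ext (Equiv.Perm.pow_prime_eq_one_iff.mpr hcyc)

/-- Let `k ∈ {2,3}` and let `u, v` be permutations of `{1,…,m}` satisfying the braid
relation. If all nontrivial cycles of `u` have length `k` and every orbit of `⟨u, v⟩`
has cardinality `1` or `k`, then `u = v`. -/
theorem eq_of_braid_of_cycles_eq (m k : ℕ) (hm : 1 ≤ m) (hk : k = 2 ∨ k = 3)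
    (u v : Equiv.Perm (Fin m)) (h : u * v * u = v * u * v)
    (hcyc : ∀ c ∈ u.cycleType, c = k)
    (horb : ∀ x : Fin m,
      Nat.card (MulAction.orbit (Subgroup.closure {u, v} : Subgroup (Equiv.Perm (Fin m))) x) = 1 ∨
      Nat.card (MulAction.orbit (Subgroup.closure {u, v} : Subgroup (Equiv.Perm (Fin m))) x) = k) :
    u = v :=
  eq_of_braid_of_cycles_eq_general m k hk u v h hcyc horb
end

section
/- Let m ≥ 1 and let u, v₀, v₁ be permutations of {1,…,m} such that: (a) u·vᵢ·u = vᵢ·u·vᵢ for i = 0,1; (b) v₀ and v₁ commute. If u³ = 1 and every orbit of the subgroup generated by u and v₀ on {1,…,m}, as well as every orbit of the subgroup generated by u and v₁, has cardinality either 1 or 4, then v₀ = v₁. -/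
/-!
A finite check in `S₄` shows that `σ³ = 1` and `στσ = τστ` force `(στ)³ = 1`. Since every orbit
of `⟨u, vᵢ⟩` has one or four points, this gives `(u vᵢ)³ = 1` globally. Combined with `u³ = 1` and
the braid relation this yields `vᵢ u⁻¹ vᵢ = u`, and `vᵢ³ = 1` because `vᵢ` is conjugate to `u`.
Now `w = v₀⁻¹ v₁` commutes with `u` and satisfies `w u⁻¹ w = u⁻¹`, so `w² = 1`; as `v₀` and `v₁`
commute, also `w³ = v₀⁻³ v₁³ = 1`, whence `w = 1`.
-/

set_option maxRecDepth 10000 in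
theorem Equiv.Perm.mul_pow_three_eq_one_of_braid_fin_four (σ τ : Equiv.Perm (Fin 4))
    (hσ : σ ^ 3 = 1) (hστ : σ * τ * σ = τ * σ * τ) : (σ * τ) ^ 3 = 1 := by
  revert σ τ
  decide

section Braid

variable {G : Type*} [Group G] {u v : G}

theorem mul_pow_three_smul_eq_of_braid_of_card_eq_one_or_four {α : Type*} [MulAction G α]
    (hα : Nat.card α = 1 ∨ Nat.card α = 4) (hu : u ^ 3 = 1) (huv : u * v * u = v * u * v)
    (x : α) : (u * v) ^ 3 • x = x := by
  rcases hα with hα | hα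
  · have : Subsingleton α := (Nat.card_eq_one_iff_unique.mp hα).1
    exact Subsingleton.elim _ _
  · have : Finite α := Nat.finite_of_card_ne_zero (by omega)
    let e := Finite.equivFinOfCardEq hα
    let φ : G →* Equiv.Perm (Fin 4) :=
      (e.permCongrHom : Equiv.Perm α →* Equiv.Perm (Fin 4)).comp (MulAction.toPermHom G α)
    have hφ : φ ((u * v) ^ 3) = 1 := by
      simpa only [map_mul, map_pow] using
        Equiv.Perm.mul_pow_three_eq_one_of_braid_fin_four (φ u) (φ v)
          (by rw [← map_pow, hu, map_one]) (by simp only [← map_mul, huv])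
    simpa [φ] using DFunLike.congr_fun hφ (e x)

theorem mul_pow_three_smul_eq_of_braid_of_card_orbit {α : Type*} [MulAction G α]
    (horb : ∀ x : α, Nat.card (MulAction.orbit (Subgroup.closure {u, v}) x) = 1 ∨
      Nat.card (MulAction.orbit (Subgroup.closure {u, v}) x) = 4)
    (hu : u ^ 3 = 1) (huv : u * v * u = v * u * v) (x : α) : (u * v) ^ 3 • x = x := by
  let u' : Subgroup.closure {u, v} := ⟨u, Subgroup.subset_closure (by simp)⟩
  let v' : Subgroup.closure {u, v} := ⟨v, Subgroup.subset_closure (by simp)⟩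
  exact congrArg Subtype.val <| mul_pow_three_smul_eq_of_braid_of_card_eq_one_or_four (horb x)
    (u := u') (v := v') (Subtype.ext (by simpa using hu)) (Subtype.ext (by simpa using huv))
    ⟨x, MulAction.mem_orbit_self x⟩

theorem pow_three_eq_one_of_braid (hu : u ^ 3 = 1) (huv : u * v * u = v * u * v) : v ^ 3 = 1 := by
  have hconj : v = (u * v) * u * (u * v)⁻¹ := by
    rw [eq_mul_inv_iff_mul_eq, ← mul_assoc, huv]
  rw [hconj, conj_pow, hu, mul_one, mul_inv_cancel]

theorem mul_inv_mul_eq_of_braid (hu : u ^ 3 = 1) (huv : u * v * u = v * u * v)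
    (huv3 : (u * v) ^ 3 = 1) : v * u⁻¹ * v = u := by
  have hsq : (u * v * u) * (u * v * u) = 1 := by
    nth_rewrite 2 [huv]
    rw [← huv3, pow_three]
    group
  calc v * u⁻¹ * v = v * (u ^ 3)⁻¹ * u * u * v := by group
    _ = u⁻¹ * ((u * v * u) * (u * v * u)) * u⁻¹ := by rw [hu]; group
    _ = u⁻¹ * u⁻¹ * u ^ 3 := by rw [hsq, hu]; group
    _ = u := by group

theorem commute_inv_mul_of_mul_inv_mul_eq {v₀ v₁ : G} (hu : u ^ 3 = 1)
    (h₀ : v₀ * u⁻¹ * v₀ = u) (h₁ : v₁ * u⁻¹ * v₁ = u) (hcomm : Commute v₀ v₁) :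
    Commute (v₀⁻¹ * v₁) u := by
  have hu' : u⁻¹ * u⁻¹ = u := by
    calc u⁻¹ * u⁻¹ = u⁻¹ * u⁻¹ * u ^ 3 := by rw [hu, mul_one]
      _ = u := by group
  have hsymm : ∀ a b : G, a * u⁻¹ * a = u → b * u⁻¹ * b = u → a * u * b = u * (b * a)⁻¹ * u := by
    intro a b ha hb
    calc a * u * b = a * (u⁻¹ * u⁻¹) * b := by rw [hu']
      _ = a * (a * u⁻¹ * a)⁻¹ * (b * u⁻¹ * b)⁻¹ * b := by rw [ha, hb]; group
      _ = u * (b * a)⁻¹ * u := by group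
  have hrel : v₁ * u * v₀ = v₀ * u * v₁ := by
    rw [hsymm v₀ v₁ h₀ h₁, hsymm v₁ v₀ h₁ h₀, hcomm.eq]
  calc v₀⁻¹ * v₁ * u = v₀⁻¹ * (v₁ * u * v₀) * v₀⁻¹ := by group
    _ = u * (v₁ * v₀⁻¹) := by rw [hrel]; group
    _ = u * (v₀⁻¹ * v₁) := by rw [hcomm.inv_left.eq]

theorem eq_of_commute_of_mul_inv_mul_eq {v₀ v₁ : G} (hu : u ^ 3 = 1)
    (h₀ : v₀ * u⁻¹ * v₀ = u) (h₁ : v₁ * u⁻¹ * v₁ = u) (hv₀ : v₀ ^ 3 = 1) (hv₁ : v₁ ^ 3 = 1)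
    (hcomm : Commute v₀ v₁) : v₀ = v₁ := by
  have hw2 : (v₀⁻¹ * v₁) ^ 2 = 1 := by
    have h : (v₀⁻¹ * v₁) * u⁻¹ * (v₀⁻¹ * v₁) = u⁻¹ := by
      calc v₀⁻¹ * v₁ * u⁻¹ * (v₀⁻¹ * v₁) = v₀⁻¹ * (v₁ * u⁻¹ * v₁) * v₀⁻¹ := by
            nth_rewrite 2 [hcomm.inv_left.eq]; group
        _ = (v₀ * u⁻¹ * v₀)⁻¹ := by rw [h₁]; group
        _ = u⁻¹ := by rw [h₀]
    rw [(commute_inv_mul_of_mul_inv_mul_eq hu h₀ h₁ hcomm).inv_right.eq, mul_assoc] at h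
    rw [sq]
    exact mul_eq_left.mp h
  have hw3 : (v₀⁻¹ * v₁) ^ 3 = 1 := by
    rw [hcomm.inv_left.mul_pow, inv_pow, hv₀, hv₁, inv_one, one_mul]
  have hw : v₀⁻¹ * v₁ = 1 := by
    simpa using pow_gcd_eq_one.mpr ⟨hw2, hw3⟩
  exact inv_mul_eq_one.mp hw

end Braid

theorem eq_of_braid_pair_of_orbits_four_general (m : ℕ)
    (u v₀ v₁ : Equiv.Perm (Fin m))
    (h0 : u * v₀ * u = v₀ * u * v₀) (h1 : u * v₁ * u = v₁ * u * v₁)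
    (hcomm : v₀ * v₁ = v₁ * v₀)
    (hu : u ^ 3 = 1)
    (horb0 : ∀ x : Fin m,
      Nat.card (MulAction.orbit (Subgroup.closure {u, v₀} : Subgroup (Equiv.Perm (Fin m))) x) = 1 ∨
      Nat.card (MulAction.orbit (Subgroup.closure {u, v₀} : Subgroup (Equiv.Perm (Fin m))) x) = 4)
    (horb1 : ∀ x : Fin m,
      Nat.card (MulAction.orbit (Subgroup.closure {u, v₁} : Subgroup (Equiv.Perm (Fin m))) x) = 1 ∨
      Nat.card (MulAction.orbit (Subgroup.closure {u, v₁} : Subgroup (Equiv.Perm (Fin m))) x) = 4) :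
    v₀ = v₁ := by
  have c0 : (u * v₀) ^ 3 = 1 :=
    Equiv.ext (mul_pow_three_smul_eq_of_braid_of_card_orbit horb0 hu h0)
  have c1 : (u * v₁) ^ 3 = 1 :=
    Equiv.ext (mul_pow_three_smul_eq_of_braid_of_card_orbit horb1 hu h1)
  exact eq_of_commute_of_mul_inv_mul_eq hu (mul_inv_mul_eq_of_braid hu h0 c0)
    (mul_inv_mul_eq_of_braid hu h1 c1) (pow_three_eq_one_of_braid hu h0)
    (pow_three_eq_one_of_braid hu h1) hcomm

/-- Let `u, v₀, v₁` be permutations of `{1,…,m}` with `u·vᵢ·u = vᵢ·u·vᵢ` for `i = 0, 1`,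
and `v₀`, `v₁` commuting. If `u³ = 1` and all orbits of `⟨u, v₀⟩` and of `⟨u, v₁⟩` have
cardinality `1` or `4`, then `v₀ = v₁`. -/
theorem eq_of_braid_pair_of_orbits_four (m : ℕ) (hm : 1 ≤ m)
    (u v₀ v₁ : Equiv.Perm (Fin m))
    (h0 : u * v₀ * u = v₀ * u * v₀) (h1 : u * v₁ * u = v₁ * u * v₁)
    (hcomm : v₀ * v₁ = v₁ * v₀)
    (hu : u ^ 3 = 1)
    (horb0 : ∀ x : Fin m,
      Nat.card (MulAction.orbit (Subgroup.closure {u, v₀} : Subgroup (Equiv.Perm (Fin m))) x) = 1 ∨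
      Nat.card (MulAction.orbit (Subgroup.closure {u, v₀} : Subgroup (Equiv.Perm (Fin m))) x) = 4)
    (horb1 : ∀ x : Fin m,
      Nat.card (MulAction.orbit (Subgroup.closure {u, v₁} : Subgroup (Equiv.Perm (Fin m))) x) = 1 ∨
      Nat.card (MulAction.orbit (Subgroup.closure {u, v₁} : Subgroup (Equiv.Perm (Fin m))) x) = 4) :
    v₀ = v₁ :=
  eq_of_braid_pair_of_orbits_four_general m u v₀ v₁ h0 h1 hcomm hu horb0 horb1
end

section
/- Let m ≥ 1 and let u be a permutation of {1,…,m} with cycle decomposition type (1)^{ℓ₁}(2)^{ℓ₂}⋯(m)^{ℓ_m}, where ℓ₁ is the number of fixed points of u and, for k ≥ 2, ℓ_k is the number of k-cycles of u. If P is a nonabelian subgroup of the centralizer of u in S_m, then there exists k ∈ {1,…,m} such that P contains a proper subgroup of index at most ℓ_k. -/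
/-!
`P` acts on the fixed points of `u`, and by conjugation on the `k`-cycles of `u` for each `k`.
If one of these actions moves something, the stabilizer of a moved point is a proper subgroup
whose index is the size of its orbit, hence at most `ℓ₁` resp. `ℓ_k`. Otherwise every element of
`P` fixes the fixed points of `u` and commutes with every cycle `c` of `u`, so it acts on the
support of `c` as a power of `c`; two such permutations commute, contradicting that `P` is
nonabelian.
-/

namespace MulAction

theorem exists_subgroup_ne_top_index_le_ncard {G X : Type*} [Group G] [MulAction G X]
    {x : X} {s : Set X} (hs : s.Finite) (hxs : ∀ g : G, g • x ∈ s) {g : G}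
    (hg : g • x ≠ x) : ∃ Q : Subgroup G, Q ≠ ⊤ ∧ Q.index ≤ s.ncard := by
  refine ⟨stabilizer G x, fun h => hg (h ▸ Subgroup.mem_top g : g ∈ stabilizer G x), ?_⟩
  rw [index_stabilizer]
  exact Set.ncard_le_ncard (by rintro _ ⟨g, rfl⟩; exact hxs g) hs

end MulAction

open Finset Subgroup

namespace Equiv.Perm

variable {α : Type*} [DecidableEq α] [Fintype α]

theorem IsCycle.exists_zpow_eqOn_support {g c : Perm α} (hc : c.IsCycle) (h : Commute g c) :
    ∃ j : ℤ, ∀ x ∈ c.support, g x = (c ^ j) x := by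
  obtain ⟨_, j, hj⟩ := hc.commute_iff.mp h
  refine ⟨j, fun x hx => ?_⟩
  rw [show c ^ j = _ from hj, ofSubtype_apply_of_mem _ hx, subtypePerm_apply]

theorem commute_of_commute_cycleFactorsFinset_of_fixedPoints {u σ τ : Perm α}
    (hσ : ∀ x, u x = x → σ x = x) (hτ : ∀ x, u x = x → τ x = x)
    (hσc : ∀ c ∈ u.cycleFactorsFinset, Commute σ c)
    (hτc : ∀ c ∈ u.cycleFactorsFinset, Commute τ c) : Commute σ τ := by
  ext x
  by_cases hx : u x = x
  · simp only [mul_apply, hσ x hx, hτ x hx]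
  have hc : u.cycleOf x ∈ u.cycleFactorsFinset :=
    cycleOf_mem_cycleFactorsFinset_iff.mpr (mem_support.mpr hx)
  have hxc : x ∈ (u.cycleOf x).support :=
    mem_support_cycleOf_iff.mpr ⟨.refl _ _, mem_support.mpr hx⟩
  obtain ⟨i, hi⟩ := (isCycle_cycleOf u hx).exists_zpow_eqOn_support (hσc _ hc)
  obtain ⟨j, hj⟩ := (isCycle_cycleOf u hx).exists_zpow_eqOn_support (hτc _ hc)
  rw [mul_apply, mul_apply, hj x hxc, hi _ (zpow_apply_mem_support.mpr hxc), hi x hxc,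
    hj _ (zpow_apply_mem_support.mpr hxc), ← mul_apply, ← mul_apply, ← zpow_add, ← zpow_add,
    add_comm]

variable {u : Perm α} {P : Subgroup (Perm α)}

theorem exists_subgroup_ne_top_index_le_card_fixedPoints (hP : P ≤ centralizer {u}) {g : P}
    {x : α} (hx : u x = x) (hgx : (g : Perm α) x ≠ x) :
    ∃ Q : Subgroup P, Q ≠ ⊤ ∧ Q.index ≤ (univ.filter fun y : α => u y = y).card := by
  have hmem : ∀ h : P, u ((h : Perm α) x) = (h : Perm α) x := fun h => by
    rw [← mul_apply, ← mem_centralizer_singleton_iff.mp (hP h.2), mul_apply, hx]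
  rw [← Set.ncard_coe_finset, coe_filter_univ]
  exact MulAction.exists_subgroup_ne_top_index_le_ncard (Set.toFinite _) hmem hgx

open OnCycleFactors in
theorem exists_subgroup_ne_top_index_le_count_cycleType (hP : P ≤ centralizer {u}) {g : P}
    {c : Perm α} (hc : c ∈ u.cycleFactorsFinset) (hgc : ¬Commute (g : Perm α) c) :
    ∃ Q : Subgroup P, Q ≠ ⊤ ∧ Q.index ≤ u.cycleType.count c.support.card := by
  let _ : MulAction P u.cycleFactorsFinset := MulAction.compHom _ (inclusion hP)
  have hgc' : g • (⟨c, hc⟩ : u.cycleFactorsFinset) ≠ ⟨c, hc⟩ := fun h =>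
    hgc (mul_inv_eq_iff_eq_mul.mp (congrArg Subtype.val h))
  obtain ⟨Q, hQ, hQc⟩ := MulAction.exists_subgroup_ne_top_index_le_ncard
    (s := {d | d.1.support.card = c.support.card}) (Set.toFinite _)
    (fun _ => card_support_conj) hgc'
  rw [CycleType.count_def, ← Nat.card_eq_fintype_card]
  exact ⟨Q, hQ, hQc.trans_eq (Nat.card_coe_set_eq _).symm⟩

end Equiv.Perm

theorem exists_proper_subgroup_index_le_of_le_centralizer_general (m : ℕ)
    (u : Equiv.Perm (Fin m)) (ℓ : ℕ → ℕ)
    (hℓ1 : ℓ 1 = (Finset.univ.filter fun x : Fin m => u x = x).card)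
    (hℓ : ∀ k, 2 ≤ k → ℓ k = u.cycleType.count k)
    (P : Subgroup (Equiv.Perm (Fin m)))
    (hP : P ≤ Subgroup.centralizer {u})
    (hna : ¬ ∀ a b : P, a * b = b * a) :
    ∃ k, 1 ≤ k ∧ k ≤ m ∧ ∃ Q : Subgroup ↥P, Q ≠ ⊤ ∧ Q.index ≤ ℓ k := by
  by_cases hfix : ∃ g : P, ∃ x, u x = x ∧ (g : Equiv.Perm (Fin m)) x ≠ x
  · obtain ⟨g, x, hx, hgx⟩ := hfix
    exact ⟨1, le_rfl, x.pos,
      hℓ1 ▸ Equiv.Perm.exists_subgroup_ne_top_index_le_card_fixedPoints hP hx hgx⟩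
  by_cases hcyc : ∃ g : P, ∃ c ∈ u.cycleFactorsFinset, ¬Commute (g : Equiv.Perm (Fin m)) c
  · obtain ⟨g, c, hc, hgc⟩ := hcyc
    have h2 := (Equiv.Perm.mem_cycleFactorsFinset_iff.mp hc).1.two_le_card_support
    refine ⟨c.support.card, by omega, (Finset.card_le_univ _).trans_eq (Fintype.card_fin m), ?_⟩
    exact hℓ _ h2 ▸ Equiv.Perm.exists_subgroup_ne_top_index_le_count_cycleType hP hc hgc
  push Not at hfix hcyc
  exact hna.elim fun a b => Subtype.ext <|
    Equiv.Perm.commute_of_commute_cycleFactorsFinset_of_fixedPoints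
      (hfix a) (hfix b) (hcyc a) (hcyc b) |>.eq

/-- Let `u` be a permutation of `{1,…,m}` with cycle decomposition type
`(1)^{ℓ₁}(2)^{ℓ₂}⋯(m)^{ℓ_m}` (so `ℓ₁` is the number of fixed points of `u` and, for
`k ≥ 2`, `ℓ_k` is the number of `k`-cycles of `u`). If `P` is a nonabelian subgroup of
the centralizer of `u`, then for some `k ∈ {1,…,m}` the group `P` contains a proper
subgroup of index at most `ℓ_k`. -/
theorem exists_proper_subgroup_index_le_of_le_centralizer (m : ℕ) (hm : 1 ≤ m)
    (u : Equiv.Perm (Fin m)) (ℓ : ℕ → ℕ)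
    (hℓ1 : ℓ 1 = (Finset.univ.filter fun x : Fin m => u x = x).card)
    (hℓ : ∀ k, 2 ≤ k → ℓ k = u.cycleType.count k)
    (P : Subgroup (Equiv.Perm (Fin m)))
    (hP : P ≤ Subgroup.centralizer {u})
    (hna : ¬ ∀ a b : P, a * b = b * a) :
    ∃ k, 1 ≤ k ∧ k ≤ m ∧ ∃ Q : Subgroup ↥P, Q ≠ ⊤ ∧ Q.index ≤ ℓ k :=
  exists_proper_subgroup_index_le_of_le_centralizer_general m u ℓ hℓ1 hℓ P hP hna
end

section
/- Let g ≥ 4 and let r be a divisor of g with 2 ≤ r ≤ g, and set k = g/r. Then r! · 2^{g²/r} · (∏_{i=1}^{k} (2^{2i} − 1))^r < 2^{g²−g} · (2^g + 1) · ∏_{i=1}^{g−1} (2^{2i} − 1). (This says that the order of the maximal subgroup Sp_{2k}(F₂) ≀ S_r of Sp_{2g}(F₂) is less than half the order of O⁻_{2g}(F₂), whose order is 2^{g²−g+1}(2^g + 1)∏_{i=1}^{g−1}(2^{2i} − 1).) -/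
/-!
Since `2^(2i-1) ≤ 2^(2i) - 1 ≤ 2^(2i)`, the product `∏_{i=1}^n (2^(2i) - 1)` lies between
`2^(n²)` and `2^(n²+n)`. With `r! ≤ g!` and `2k ≤ g`, the order of the wreath product is
therefore at most `g!·2^(g²+g)`, while half the order of `O⁻_{2g}(F₂)` exceeds `2^(2g²-2g+1)`.
What remains is `g! ≤ 2^(g²-3g+1)`, which holds from `g = 4` on.
-/

open Finset Nat

theorem prod_Icc_two_pow_two_mul_sub_one_le (n : ℕ) :
    ∏ i ∈ Icc 1 n, (2 ^ (2 * i) - 1) ≤ 2 ^ (n ^ 2 + n) := by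
  induction n with
  | zero => simp
  | succ n ih =>
    rw [prod_Icc_succ_top (by omega)]
    calc (∏ i ∈ Icc 1 n, (2 ^ (2 * i) - 1)) * (2 ^ (2 * (n + 1)) - 1)
        ≤ 2 ^ (n ^ 2 + n) * 2 ^ (2 * (n + 1)) := Nat.mul_le_mul ih (Nat.sub_le _ _)
      _ = 2 ^ ((n + 1) ^ 2 + (n + 1)) := by rw [← pow_add]; ring_nf

theorem two_pow_sq_le_prod_Icc_two_pow_two_mul_sub_one (n : ℕ) :
    2 ^ n ^ 2 ≤ ∏ i ∈ Icc 1 n, (2 ^ (2 * i) - 1) := by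
  induction n with
  | zero => simp
  | succ n ih =>
    rw [prod_Icc_succ_top (by omega)]
    have hfactor : 2 ^ (2 * n + 1) ≤ 2 ^ (2 * (n + 1)) - 1 := by
      have : 2 ^ (2 * (n + 1)) = 2 * 2 ^ (2 * n + 1) := by ring
      have : 1 ≤ 2 ^ (2 * n + 1) := Nat.one_le_two_pow
      omega
    calc 2 ^ (n + 1) ^ 2 = 2 ^ n ^ 2 * 2 ^ (2 * n + 1) := by rw [← pow_add]; ring_nf
      _ ≤ _ := Nat.mul_le_mul ih hfactor

theorem factorial_mul_two_pow_le (n : ℕ) (hn : 4 ≤ n) : n ! * 2 ^ (3 * n) ≤ 2 ^ (n ^ 2 + 1) := by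
  induction n, hn using Nat.le_induction with
  | base => decide
  | succ n hn ih =>
    have hsucc : n + 1 ≤ 2 ^ (2 * n - 2) := by
      calc n + 1 ≤ 2 ^ n := Nat.lt_two_pow_self
        _ ≤ 2 ^ (2 * n - 2) := Nat.pow_le_pow_right (by norm_num) (by omega)
    calc (n + 1)! * 2 ^ (3 * (n + 1)) = (n + 1) * (n ! * 2 ^ (3 * n)) * 2 ^ 3 := by
          rw [Nat.factorial_succ]; ring
      _ ≤ 2 ^ (2 * n - 2) * 2 ^ (n ^ 2 + 1) * 2 ^ 3 := by gcongr
      _ = 2 ^ ((n + 1) ^ 2 + 1) := by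
          rw [← pow_add, ← pow_add]; congr 1
          obtain ⟨m, rfl⟩ : ∃ m, n = m + 1 := ⟨n - 1, by omega⟩
          rw [show 2 * (m + 1) - 2 = 2 * m by omega]; ring

theorem wreath_order_le_factorial_mul_two_pow (g r : ℕ) (hr : 2 ≤ r) (hrg : r ≤ g)
    (hdvd : r ∣ g) :
    r ! * 2 ^ (g ^ 2 / r) * (∏ i ∈ Icc 1 (g / r), (2 ^ (2 * i) - 1)) ^ r ≤
      g ! * 2 ^ (g ^ 2 + g) := by
  obtain ⟨k, rfl⟩ := hdvd
  have hr0 : 0 < r := by omega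
  have hsq_div : (r * k) ^ 2 / r = r * k ^ 2 := by
    rw [show (r * k) ^ 2 = r * (r * k ^ 2) by ring, Nat.mul_div_cancel_left _ hr0]
  rw [Nat.mul_div_cancel_left _ hr0, hsq_div]
  calc r ! * 2 ^ (r * k ^ 2) * (∏ i ∈ Icc 1 k, (2 ^ (2 * i) - 1)) ^ r
      ≤ (r * k) ! * 2 ^ (r * k ^ 2) * (2 ^ (k ^ 2 + k)) ^ r := by
        gcongr
        exact prod_Icc_two_pow_two_mul_sub_one_le k
    _ = (r * k) ! * 2 ^ (2 * r * k ^ 2 + r * k) := by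
        rw [← pow_mul, mul_assoc, ← pow_add]; ring_nf
    _ ≤ (r * k) ! * 2 ^ ((r * k) ^ 2 + r * k) := by
        gcongr
        · norm_num
        · rw [mul_pow]; exact Nat.mul_le_mul_right _ (by nlinarith)

theorem factorial_mul_two_pow_lt_half_o_minus_order (g : ℕ) (hg : 4 ≤ g) :
    g ! * 2 ^ (g ^ 2 + g) <
      2 ^ (g ^ 2 - g) * (2 ^ g + 1) * ∏ i ∈ Icc 1 (g - 1), (2 ^ (2 * i) - 1) := by
  obtain ⟨m, rfl⟩ : ∃ m, g = m + 1 := ⟨g - 1, by omega⟩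
  rw [Nat.add_sub_cancel, show (m + 1) ^ 2 - (m + 1) = m ^ 2 + m by
    rw [show (m + 1) ^ 2 = m ^ 2 + m + (m + 1) by ring]; omega]
  refine Nat.lt_of_mul_lt_mul_left (a := 2 ^ (3 * (m + 1))) ?_
  calc 2 ^ (3 * (m + 1)) * ((m + 1) ! * 2 ^ ((m + 1) ^ 2 + (m + 1)))
      ≤ 2 ^ ((m + 1) ^ 2 + 1) * 2 ^ ((m + 1) ^ 2 + (m + 1)) := by
        rw [← mul_assoc, mul_comm (2 ^ _)]
        exact Nat.mul_le_mul_right _ (factorial_mul_two_pow_le _ hg)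
    _ = 2 ^ (3 * (m + 1)) * (2 ^ (m ^ 2 + m) * 2 ^ (m + 1) * 2 ^ m ^ 2) := by
        simp only [← pow_add]; ring_nf
    _ < 2 ^ (3 * (m + 1)) * (2 ^ (m ^ 2 + m) * (2 ^ (m + 1) + 1) *
          ∏ i ∈ Icc 1 m, (2 ^ (2 * i) - 1)) := by
        have hprod := two_pow_sq_le_prod_Icc_two_pow_two_mul_sub_one m
        refine Nat.mul_lt_mul_of_pos_left (Nat.mul_lt_mul_of_lt_of_le ?_ hprod
          ((Nat.two_pow_pos _).trans_le hprod)) (Nat.two_pow_pos _)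
        exact Nat.mul_lt_mul_of_pos_left (Nat.lt_succ_self _) (Nat.two_pow_pos _)

/-- For `g ≥ 4` and a divisor `r` of `g` with `2 ≤ r ≤ g` (and `k = g / r`), the order
`r!·2^{g²/r}·(∏_{i=1}^{k}(2^{2i} − 1))^r` of the maximal subgroup `Sp_{2k}(F₂) ≀ S_r` of
`Sp_{2g}(F₂)` is less than half of the order `2^{g²−g+1}(2^g + 1)·∏_{i=1}^{g−1}(2^{2i} − 1)`
of `O⁻_{2g}(F₂)`. -/
theorem wreath_order_lt_half_o_minus_order (g r : ℕ) (hg : 4 ≤ g)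
    (hr2 : 2 ≤ r) (hrg : r ≤ g) (hdvd : r ∣ g) :
    r.factorial * 2 ^ (g ^ 2 / r) * (∏ i ∈ Finset.Icc 1 (g / r), (2 ^ (2 * i) - 1)) ^ r <
      2 ^ (g ^ 2 - g) * (2 ^ g + 1) * ∏ i ∈ Finset.Icc 1 (g - 1), (2 ^ (2 * i) - 1) :=
  (wreath_order_le_factorial_mul_two_pow g r hr2 hrg hdvd).trans_lt
    (factorial_mul_two_pow_lt_half_o_minus_order g hg)
end

section
/- Let g ≥ 4 and let k be an integer with 1 ≤ k ≤ g − 1. Then 2^{g² + 2k² − 2gk} · (∏_{i=1}^{g−k} (2^{2i} − 1)) · (∏_{i=1}^{k} (2^{2i} − 1)) < 2^{g²−g} · (2^g + 1) · ∏_{i=1}^{g−1} (2^{2i} − 1). (This says that the order of the maximal subgroup Sp_{2k}(F₂) × Sp_{2g−2k}(F₂) of Sp_{2g}(F₂) is less than half the order of O⁻_{2g}(F₂), whose order is 2^{g²−g+1}(2^g + 1)∏_{i=1}^{g−1}(2^{2i} − 1).) -/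
/-!
Bound the products crudely: `q ^ (n ^ 2) ≤ ∏_{i=1}^{n} (q ^ (2i) - 1) ≤ q ^ (n ^ 2 + n)`, since
`q ^ (2i - 1) ≤ q ^ (2i) - 1 ≤ q ^ (2i)`. With `m = g - k`, the left side is then at most
`2 ^ (2m² + 2k² + m + k)` and the right side at least `2 ^ (g² + (g - 1)²)`, and comparing the
exponents reduces to `3 (m + k) ≤ 4 m k`, which holds as soon as `m, k ≥ 1` and `m + k ≥ 4`.
-/

open Finset

theorem prod_Icc_pow_two_mul_sub_one_le (q n : ℕ) :
    ∏ i ∈ Icc 1 n, (q ^ (2 * i) - 1) ≤ q ^ (n ^ 2 + n) := by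
  induction n with
  | zero => simp
  | succ n ih =>
    rw [prod_Icc_succ_top (by omega), show (n + 1) ^ 2 + (n + 1) = n ^ 2 + n + 2 * (n + 1) by ring,
      pow_add]
    exact Nat.mul_le_mul ih (Nat.sub_le _ _)

theorem pow_sq_le_prod_Icc_pow_two_mul_sub_one {q : ℕ} (hq : 2 ≤ q) (n : ℕ) :
    q ^ (n ^ 2) ≤ ∏ i ∈ Icc 1 n, (q ^ (2 * i) - 1) := by
  induction n with
  | zero => simp
  | succ n ih =>
    rw [prod_Icc_succ_top (by omega), show (n + 1) ^ 2 = n ^ 2 + (2 * n + 1) by ring, pow_add]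
    have hstep : q ^ (2 * n + 1) < q ^ (2 * (n + 1)) := Nat.pow_lt_pow_right hq (by omega)
    exact Nat.mul_le_mul ih (Nat.le_sub_one_of_lt hstep)

theorem three_mul_add_le_four_mul {m k : ℕ} (hm : 1 ≤ m) (hk : 1 ≤ k) (hmk : 4 ≤ m + k) :
    3 * (m + k) ≤ 4 * m * k := by
  nlinarith

theorem sq_add_two_mul_sq_sub_two_mul_mul {g k : ℕ} (hkg : k ≤ g) :
    g ^ 2 + 2 * k ^ 2 - 2 * g * k = (g - k) ^ 2 + k ^ 2 := by
  obtain ⟨m, rfl⟩ := Nat.exists_eq_add_of_le hkg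
  rw [Nat.add_sub_cancel_left, show (k + m) ^ 2 + 2 * k ^ 2 = m ^ 2 + k ^ 2 + 2 * (k + m) * k by ring,
    Nat.add_sub_cancel]

/-- For `g ≥ 4` and `1 ≤ k ≤ g − 1`, the order
`2^{g²+2k²−2gk}·(∏_{i=1}^{g−k}(2^{2i} − 1))·(∏_{i=1}^{k}(2^{2i} − 1))` of the maximal
subgroup `Sp_{2k}(F₂) × Sp_{2g−2k}(F₂)` of `Sp_{2g}(F₂)` is less than half of the order
`2^{g²−g+1}(2^g + 1)·∏_{i=1}^{g−1}(2^{2i} − 1)` of `O⁻_{2g}(F₂)`. -/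
theorem product_order_lt_half_o_minus_order (g k : ℕ) (hg : 4 ≤ g)
    (hk1 : 1 ≤ k) (hkg : k ≤ g - 1) :
    2 ^ (g ^ 2 + 2 * k ^ 2 - 2 * g * k) *
        (∏ i ∈ Finset.Icc 1 (g - k), (2 ^ (2 * i) - 1)) *
        (∏ i ∈ Finset.Icc 1 k, (2 ^ (2 * i) - 1)) <
      2 ^ (g ^ 2 - g) * (2 ^ g + 1) * ∏ i ∈ Finset.Icc 1 (g - 1), (2 ^ (2 * i) - 1) := by
  have hexp : (g - k) ^ 2 + k ^ 2 + ((g - k) ^ 2 + (g - k)) + (k ^ 2 + k) <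
      g ^ 2 - g + g + (g - 1) ^ 2 := by
    have key := three_mul_add_le_four_mul (m := g - k) (k := k) (by omega) hk1 (by omega)
    have hg2 : g ≤ g ^ 2 := Nat.le_self_pow two_ne_zero g
    zify [hg2, (by omega : k ≤ g), (by omega : 1 ≤ g)] at key ⊢
    nlinarith
  rw [sq_add_two_mul_sq_sub_two_mul_mul (by omega)]
  calc _ ≤ 2 ^ ((g - k) ^ 2 + k ^ 2) * 2 ^ ((g - k) ^ 2 + (g - k)) * 2 ^ (k ^ 2 + k) := by
        gcongr <;> exact prod_Icc_pow_two_mul_sub_one_le 2 _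
    _ < 2 ^ (g ^ 2 - g) * 2 ^ g * 2 ^ ((g - 1) ^ 2) := by
        simp only [← pow_add]
        exact Nat.pow_lt_pow_right one_lt_two hexp
    _ ≤ _ := by
        gcongr
        · exact Nat.le_succ _
        · exact pow_sq_le_prod_Icc_pow_two_mul_sub_one le_rfl _
end
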